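/- arXiv:2402.12200 — 2 statements merged into one kernel-verified Lean document; each statement's English description precedes it below -/
import Mathlib

section
/- For a stable outcome (μ*, u*, v*) of the LTU matching problem and the corresponding Nash equilibrium (p*, q*) of the generalized hide-and-seek game given by p*_{xy} = Φ_{xy} μ*_{xy}/(Φᵀμ*), q*_x = n_x u*_x/(nᵀu* + mᵀv*), q*_y = m_y v*_y/(nᵀu* + mᵀv*), the equilibrium values satisfy π(p*, q*) = 1/(2 Φᵀμ*) and ℓ(p*, q*) = 1/(2(nᵀu* + mᵀv*)). Consequently, the maps (μ*, u*, v*) ↦ (p*, q*) and (p*, q*) ↦ (μ*, u*, v*) given by μ*_{xy} = p*_{xy}/(2 Φ_{xy} π(p*,q*)), u*_x = q*_x/(2 n_x ℓ(p*,q*)), v*_y = q*_y/(2 m_y ℓ(p*,q*)) are mutually inverse. -/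
/-!
Write `S = Φᵀμ*` and `T = nᵀu* + mᵀv*`. Complementary slackness (conditions (4)–(6)) gives
`∑ μ*_{xy} (u*_x + v*_y) = T` and `∑ μ*_{xy} (λ_{xy} u*_x + (1 - λ_{xy}) v*_y) = S / 2`.
Substituting `p*`, `q*` into the payoff and the loss, the factors `n_x`, `m_y`, `Φ_{xy}` cancel,
so `π(p*, q*) = T / (2 S T)` and `ℓ(p*, q*) = (S / 2) / (S T)`. Both `S` and `T` are positive:
feasibility (1) forces somebody to have positive utility, and then slackness forces some
`μ*_{xy} > 0`.
-/

open Finset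

lemma mul_eq_mul_of_pos_imp_eq {α : Type*} [MulZeroClass α] [PartialOrder α] {a b c : α}
    (hc : 0 ≤ c) (h : 0 < c → a = b) : c * a = c * b := by
  rcases hc.eq_or_lt with hc | hc
  · simp [← hc]
  · rw [h hc]

section HideSeek

variable {X Y : Type*} [Fintype X] [Fintype Y]

noncomputable def hideSeekPayoff (n : X → ℝ) (m : Y → ℝ) (Φ : X → Y → ℝ) (p : X × Y → ℝ)
    (q : X ⊕ Y → ℝ) : ℝ :=
  ∑ x, ∑ y, p (x, y) *
    (q (Sum.inl x) * (1 / (2 * n x * Φ x y)) + q (Sum.inr y) * (1 / (2 * m y * Φ x y)))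

noncomputable def hideSeekLoss (n : X → ℝ) (m : Y → ℝ) (lam Φ : X → Y → ℝ) (p : X × Y → ℝ)
    (q : X ⊕ Y → ℝ) : ℝ :=
  ∑ x, ∑ y, p (x, y) *
    (q (Sum.inl x) * (lam x y / (n x * Φ x y)) + q (Sum.inr y) * ((1 - lam x y) / (m y * Φ x y)))

variable {n : X → ℝ} {m : Y → ℝ} {lam Φ μ : X → Y → ℝ} {u : X → ℝ} {v : Y → ℝ} {S T : ℝ}

lemma hideSeekPayoff_eq (hn : ∀ x, n x ≠ 0) (hm : ∀ y, m y ≠ 0) (hΦ : ∀ x y, Φ x y ≠ 0) :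
    hideSeekPayoff n m Φ (fun z => Φ z.1 z.2 * μ z.1 z.2 / S)
        (Sum.elim (fun x => n x * u x / T) (fun y => m y * v y / T)) =
      (∑ x, ∑ y, μ x y * (u x + v y)) / (2 * S * T) := by
  simp only [hideSeekPayoff, Sum.elim_inl, Sum.elim_inr, sum_div]
  refine sum_congr rfl fun x _ => sum_congr rfl fun y _ => ?_
  have := hn x; have := hm y; have := hΦ x y
  field_simp

lemma hideSeekLoss_eq (hn : ∀ x, n x ≠ 0) (hm : ∀ y, m y ≠ 0) (hΦ : ∀ x y, Φ x y ≠ 0) :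
    hideSeekLoss n m lam Φ (fun z => Φ z.1 z.2 * μ z.1 z.2 / S)
        (Sum.elim (fun x => n x * u x / T) (fun y => m y * v y / T)) =
      (∑ x, ∑ y, μ x y * (lam x y * u x + (1 - lam x y) * v y)) / (S * T) := by
  simp only [hideSeekLoss, Sum.elim_inl, Sum.elim_inr, sum_div]
  refine sum_congr rfl fun x _ => sum_congr rfl fun y _ => ?_
  have := hn x; have := hm y; have := hΦ x y
  field_simp

lemma sum_sum_mul_add_eq_of_slackness (hu : ∀ x, 0 ≤ u x) (hv : ∀ y, 0 ≤ v y)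
    (hux : ∀ x, 0 < u x → ∑ y, μ x y = n x) (hvy : ∀ y, 0 < v y → ∑ x, μ x y = m y) :
    ∑ x, ∑ y, μ x y * (u x + v y) = ∑ x, n x * u x + ∑ y, m y * v y := by
  have hU : ∑ x, ∑ y, μ x y * u x = ∑ x, n x * u x := by
    refine sum_congr rfl fun x _ => ?_
    rw [← sum_mul, mul_comm, mul_eq_mul_of_pos_imp_eq (hu x) (hux x), mul_comm]
  have hV : ∑ x, ∑ y, μ x y * v y = ∑ y, m y * v y := by
    rw [sum_comm]
    refine sum_congr rfl fun y _ => ?_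
    rw [← sum_mul, mul_comm, mul_eq_mul_of_pos_imp_eq (hv y) (hvy y), mul_comm]
  simp only [mul_add, sum_add_distrib, hU, hV]

lemma sum_sum_mul_surplus_eq_of_slackness (hμ : ∀ x y, 0 ≤ μ x y)
    (htight : ∀ x y, 0 < μ x y → lam x y * u x + (1 - lam x y) * v y = Φ x y / 2) :
    ∑ x, ∑ y, μ x y * (lam x y * u x + (1 - lam x y) * v y) = (∑ x, ∑ y, Φ x y * μ x y) / 2 := by
  simp only [sum_div]
  refine sum_congr rfl fun x _ => sum_congr rfl fun y _ => ?_
  rw [mul_eq_mul_of_pos_imp_eq (hμ x y) (htight x y)]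
  ring

lemma total_utility_pos [Nonempty X] [Nonempty Y] (hn : ∀ x, 0 < n x) (hm : ∀ y, 0 < m y)
    (hΦ : ∀ x y, 0 < Φ x y) (hu : ∀ x, 0 ≤ u x) (hv : ∀ y, 0 ≤ v y)
    (hfeas : ∀ x y, lam x y * u x + (1 - lam x y) * v y ≥ Φ x y / 2) :
    0 < ∑ x, n x * u x + ∑ y, m y * v y := by
  obtain ⟨x⟩ := ‹Nonempty X›
  obtain ⟨y⟩ := ‹Nonempty Y›
  have hnu : ∀ x ∈ univ, 0 ≤ n x * u x := fun x _ => mul_nonneg (hn x).le (hu x)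
  have hmv : ∀ y ∈ univ, 0 ≤ m y * v y := fun y _ => mul_nonneg (hm y).le (hv y)
  have hsomeone : 0 < u x ∨ 0 < v y := by
    by_contra! h
    have := hfeas x y
    rw [le_antisymm h.1 (hu x), le_antisymm h.2 (hv y)] at this
    linarith [hΦ x y]
  have := sum_nonneg hnu
  have := sum_nonneg hmv
  rcases hsomeone with h | h
  · linarith [single_le_sum hnu (mem_univ x), mul_pos (hn x) h]
  · linarith [single_le_sum hmv (mem_univ y), mul_pos (hm y) h]

lemma total_surplus_pos {w : X → Y → ℝ} (hΦ : ∀ x y, 0 < Φ x y) (hμ : ∀ x y, 0 ≤ μ x y)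
    (hw : 0 < ∑ x, ∑ y, μ x y * w x y) : 0 < ∑ x, ∑ y, Φ x y * μ x y := by
  obtain ⟨x, -, hx⟩ := exists_ne_zero_of_sum_ne_zero hw.ne'
  obtain ⟨y, -, hy⟩ := exists_ne_zero_of_sum_ne_zero hx
  have hμxy : 0 < μ x y := (hμ x y).lt_of_ne (left_ne_zero_of_mul hy).symm
  exact sum_pos' (fun x _ => sum_nonneg fun y _ => mul_nonneg (hΦ x y).le (hμ x y))
    ⟨x, mem_univ x, sum_pos' (fun y _ => mul_nonneg (hΦ x y).le (hμ x y))
      ⟨y, mem_univ y, mul_pos (hΦ x y) hμxy⟩⟩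

end HideSeek

theorem ltu_hide_seek_values_and_inverse_general
    {X Y : Type*} [Fintype X] [Fintype Y] [Nonempty X] [Nonempty Y]
    (n : X → ℝ) (m : Y → ℝ) (lam Φ : X → Y → ℝ)
    (μ : X → Y → ℝ) (u : X → ℝ) (v : Y → ℝ)
    (hn : ∀ x, 0 < n x) (hm : ∀ y, 0 < m y)
    (hΦ : ∀ x y, 0 < Φ x y)
    (hμ0 : ∀ x y, 0 ≤ μ x y) (hu0 : ∀ x, 0 ≤ u x) (hv0 : ∀ y, 0 ≤ v y)
    (h1 : ∀ x y, lam x y * u x + (1 - lam x y) * v y ≥ Φ x y / 2)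
    (h4 : ∀ x y, 0 < μ x y → lam x y * u x + (1 - lam x y) * v y = Φ x y / 2)
    (h5 : ∀ x, 0 < u x → ∑ y, μ x y = n x)
    (h6 : ∀ y, 0 < v y → ∑ x, μ x y = m y)
    (ℓ π : (X × Y → ℝ) → (X ⊕ Y → ℝ) → ℝ)
    (hℓ : ∀ p q, ℓ p q = ∑ x, ∑ y, p (x, y) *
      (q (Sum.inl x) * (lam x y / (n x * Φ x y)) +
       q (Sum.inr y) * ((1 - lam x y) / (m y * Φ x y))))
    (hπ : ∀ p q, π p q = ∑ x, ∑ y, p (x, y) *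
      (q (Sum.inl x) * (1 / (2 * n x * Φ x y)) +
       q (Sum.inr y) * (1 / (2 * m y * Φ x y))))
    (pstar : X × Y → ℝ) (qstar : X ⊕ Y → ℝ)
    (hp : ∀ z : X × Y, pstar z = Φ z.1 z.2 * μ z.1 z.2 / (∑ x, ∑ y, Φ x y * μ x y))
    (hq : qstar = Sum.elim
      (fun x => n x * u x / ((∑ x, n x * u x) + (∑ y, m y * v y)))
      (fun y => m y * v y / ((∑ x, n x * u x) + (∑ y, m y * v y)))) :
    π pstar qstar = 1 / (2 * ∑ x, ∑ y, Φ x y * μ x y) ∧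
    ℓ pstar qstar = 1 / (2 * ((∑ x, n x * u x) + (∑ y, m y * v y))) ∧
    -- round trip: applying the inverse map recovers the stable outcome
    (∀ x y, μ x y = pstar (x, y) / (2 * Φ x y * π pstar qstar)) ∧
    (∀ x, u x = qstar (Sum.inl x) / (2 * n x * ℓ pstar qstar)) ∧
    (∀ y, v y = qstar (Sum.inr y) / (2 * m y * ℓ pstar qstar)) := by
  set S := ∑ x, ∑ y, Φ x y * μ x y
  set T := ∑ x, n x * u x + ∑ y, m y * v y
  have hsplit : ∑ x, ∑ y, μ x y * (u x + v y) = T :=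
    sum_sum_mul_add_eq_of_slackness hu0 hv0 h5 h6
  have hsurplus : ∑ x, ∑ y, μ x y * (lam x y * u x + (1 - lam x y) * v y) = S / 2 :=
    sum_sum_mul_surplus_eq_of_slackness hμ0 h4
  have hT : 0 < T := total_utility_pos hn hm hΦ hu0 hv0 h1
  have hS : 0 < S := total_surplus_pos hΦ hμ0 (by rwa [hsplit])
  have hn' x := (hn x).ne'
  have hm' y := (hm y).ne'
  have hΦ' x y := (hΦ x y).ne'
  have hpstar : pstar = fun z => Φ z.1 z.2 * μ z.1 z.2 / S := funext hp
  have hπval : π pstar qstar = 1 / (2 * S) := by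
    rw [hπ]
    change hideSeekPayoff n m Φ pstar qstar = _
    rw [hpstar, hq, hideSeekPayoff_eq hn' hm' hΦ', hsplit]
    field_simp
  have hℓval : ℓ pstar qstar = 1 / (2 * T) := by
    rw [hℓ]
    change hideSeekLoss n m lam Φ pstar qstar = _
    rw [hpstar, hq, hideSeekLoss_eq hn' hm' hΦ', hsurplus]
    field_simp
  refine ⟨hπval, hℓval, fun x y => ?_, fun x => ?_, fun y => ?_⟩
  · rw [hπval, hp]
    field_simp [hΦ' x y]
  · rw [hℓval, hq, Sum.elim_inl]
    field_simp [hn' x]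
  · rw [hℓval, hq, Sum.elim_inr]
    field_simp [hm' y]

/-- For a stable outcome and the associated equilibrium strategies,
the equilibrium values are π(p*,q*) = 1/(2Φᵀμ*) and ℓ(p*,q*) = 1/(2(nᵀu*+mᵀv*)),
and the maps between stable outcomes and equilibrium strategies are mutually
inverse. -/
theorem ltu_hide_seek_values_and_inverse
    {X Y : Type*} [Fintype X] [Fintype Y] [Nonempty X] [Nonempty Y]
    (n : X → ℝ) (m : Y → ℝ) (lam Φ : X → Y → ℝ)
    (μ : X → Y → ℝ) (u : X → ℝ) (v : Y → ℝ)
    (hn : ∀ x, 0 < n x) (hm : ∀ y, 0 < m y)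
    (hlam : ∀ x y, lam x y ∈ Set.Ioo (0 : ℝ) 1)
    (hΦ : ∀ x y, 0 < Φ x y)
    (hμ0 : ∀ x y, 0 ≤ μ x y) (hu0 : ∀ x, 0 ≤ u x) (hv0 : ∀ y, 0 ≤ v y)
    (h1 : ∀ x y, lam x y * u x + (1 - lam x y) * v y ≥ Φ x y / 2)
    (h2 : ∀ x, ∑ y, μ x y ≤ n x)
    (h3 : ∀ y, ∑ x, μ x y ≤ m y)
    (h4 : ∀ x y, 0 < μ x y → lam x y * u x + (1 - lam x y) * v y = Φ x y / 2)
    (h5 : ∀ x, 0 < u x → ∑ y, μ x y = n x)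
    (h6 : ∀ y, 0 < v y → ∑ x, μ x y = m y)
    (ℓ π : (X × Y → ℝ) → (X ⊕ Y → ℝ) → ℝ)
    (hℓ : ∀ p q, ℓ p q = ∑ x, ∑ y, p (x, y) *
      (q (Sum.inl x) * (lam x y / (n x * Φ x y)) +
       q (Sum.inr y) * ((1 - lam x y) / (m y * Φ x y))))
    (hπ : ∀ p q, π p q = ∑ x, ∑ y, p (x, y) *
      (q (Sum.inl x) * (1 / (2 * n x * Φ x y)) +
       q (Sum.inr y) * (1 / (2 * m y * Φ x y))))
    (pstar : X × Y → ℝ) (qstar : X ⊕ Y → ℝ)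
    (hp : ∀ z : X × Y, pstar z = Φ z.1 z.2 * μ z.1 z.2 / (∑ x, ∑ y, Φ x y * μ x y))
    (hq : qstar = Sum.elim
      (fun x => n x * u x / ((∑ x, n x * u x) + (∑ y, m y * v y)))
      (fun y => m y * v y / ((∑ x, n x * u x) + (∑ y, m y * v y)))) :
    π pstar qstar = 1 / (2 * ∑ x, ∑ y, Φ x y * μ x y) ∧
    ℓ pstar qstar = 1 / (2 * ((∑ x, n x * u x) + (∑ y, m y * v y))) ∧
    -- round trip: applying the inverse map recovers the stable outcome
    (∀ x y, μ x y = pstar (x, y) / (2 * Φ x y * π pstar qstar)) ∧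
    (∀ x, u x = qstar (Sum.inl x) / (2 * n x * ℓ pstar qstar)) ∧
    (∀ y, v y = qstar (Sum.inr y) / (2 * m y * ℓ pstar qstar)) :=
  ltu_hide_seek_values_and_inverse_general n m lam Φ μ u v hn hm hΦ hμ0 hu0 hv0 h1 h4 h5 h6 ℓ π hℓ
    hπ pstar qstar hp hq
end

section
/- In the many-to-one LTU matching model, if (μ*, u*) is a stable outcome with all Φ_a > 0, then defining p*_a = Φ_a μ*_a/(Φᵀμ*) and q*_x = n_x u*_x/(nᵀu*), the expected loss of player 1 in the N-dimensional hide-and-seek game satisfies ℓ(p, q*) ≥ 1/(nᵀu*) for every probability distribution p on A, with equality at p = p*; hence p* is a best response to q*. -/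
/-! Against q*, an arrangement a costs player 1 exactly (Σᵢ λ_{i,a} u*_{xᵢ}) / ((nᵀu*) Φ_a): the
factor n_x in q*_x cancels the n_x in α_{x,a}. Stability says the numerator is at least Φ_a, with
equality wherever μ*_a > 0, i.e. on the support of p*. So every arrangement costs at least
1/(nᵀu*), and p* only uses arrangements attaining this bound. -/

open Finset

section Averaging

variable {ι R : Type*} [Fintype ι] [CommSemiring R]

theorem le_sum_mul_of_forall_le [PartialOrder R] [IsOrderedRing R] {p f : ι → R} {c : R}
    (hp0 : ∀ a, 0 ≤ p a) (hp1 : ∑ a, p a = 1) (hf : ∀ a, c ≤ f a) : c ≤ ∑ a, p a * f a :=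
  calc c = ∑ a, p a * c := by rw [← sum_mul, hp1, one_mul]
    _ ≤ ∑ a, p a * f a := sum_le_sum fun a _ => mul_le_mul_of_nonneg_left (hf a) (hp0 a)

theorem sum_mul_eq_of_ne_zero {p f : ι → R} {c : R}
    (hp1 : ∑ a, p a = 1) (hf : ∀ a, p a ≠ 0 → f a = c) : ∑ a, p a * f a = c :=
  calc ∑ a, p a * f a = ∑ a, p a * c := sum_congr rfl fun a _ => by
        by_cases ha : p a = 0
        · simp [ha]
        · rw [hf a ha]
    _ = c := by rw [← sum_mul, hp1, one_mul]

end Averaging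

theorem sum_mul_sum_ite_eq_sum_mul_elim {ι X R : Type*} [Fintype ι] [Fintype X] [DecidableEq X]
    [CommSemiring R] (m : ι → Option X) (w : ι → R) (u : X → R) :
    ∑ x, u x * ∑ i, (if m i = some x then w i else 0) = ∑ i, w i * (m i).elim 0 u := by
  simp_rw [mul_sum]
  rw [sum_comm]
  refine sum_congr rfl fun i _ => ?_
  cases m i <;> simp [mul_comm]

theorem sum_loss_eq_div {ι X : Type*} [Fintype ι] [Fintype X] [DecidableEq X] {n : X → ℝ}
    (hn : ∀ x, n x ≠ 0) (m : ι → Option X) (w : ι → ℝ) (u : X → ℝ) (U φ : ℝ) :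
    ∑ x, n x * u x / U * ((∑ i, if m i = some x then w i else 0) / (n x * φ)) =
      (∑ i, w i * (m i).elim 0 u) / (U * φ) := by
  rw [← sum_mul_sum_ite_eq_sum_mul_elim, sum_div]
  refine sum_congr rfl fun x _ => ?_
  have := hn x
  field_simp

theorem pos_of_le_sum_mul_elim_of_single {ι X : Type*} [Fintype ι] {m : ι → Option X}
    {w : ι → ℝ} {u : X → ℝ} {c : ℝ} {i : ι} {x : X} (hc : 0 < c) (hwi : 0 ≤ w i)
    (hmi : m i = some x) (hm : ∀ j ≠ i, m j = none) (hw : ∀ j, m j = none → w j = 0)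
    (h : c ≤ ∑ j, w j * (m j).elim 0 u) : 0 < u x := by
  rw [Fintype.sum_eq_single i fun j hj => by rw [hw j (hm j hj), zero_mul], hmi] at h
  exact pos_of_mul_pos_right (hc.trans_le h) hwi

theorem exists_pos_of_sum_mul_ne_zero {ι : Type*} [Fintype ι] {c μ : ι → ℝ}
    (hμ : ∀ a, 0 ≤ μ a) (h : ∑ a, c a * μ a ≠ 0) : ∃ a, 0 < μ a := by
  obtain ⟨a, -, ha⟩ := exists_ne_zero_of_sum_ne_zero h
  exact ⟨a, (hμ a).lt_of_ne' (right_ne_zero_of_mul ha)⟩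

theorem many_to_one_player1_best_response_general
    {X : Type*} [Fintype X] [DecidableEq X] [Nonempty X]
    {N : ℕ} {A : Type*} [Fintype A]
    (memb : A → Fin N → Option X)
    (lam : A → Fin N → ℝ) (Φ : A → ℝ) (n : X → ℝ)
    (μ : A → ℝ) (u : X → ℝ)
    (hn : ∀ x, 0 < n x) (hΦ : ∀ a, 0 < Φ a)
    (hlam0 : ∀ a i, 0 ≤ lam a i)
    (hlamnone : ∀ a i, lam a i = 0 ↔ memb a i = none)
    -- each type has a singleton arrangement
    (hsingle : ∀ x : X, ∃ a : A, ∃ i, memb a i = some x ∧ ∀ j, j ≠ i → memb a j = none)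
    -- stability of (μ, u)
    (hμ0 : ∀ a, 0 ≤ μ a)
    (hfeas : ∀ x, ∑ a, ((Finset.univ.filter fun i => memb a i = some x).card : ℝ) * μ a = n x)
    (hstab1 : ∀ a, ∑ i, lam a i * (memb a i).elim 0 u ≥ Φ a)
    (hstab2 : ∀ a, 0 < μ a → ∑ i, lam a i * (memb a i).elim 0 u = Φ a)
    -- expected loss of player 1
    (ℓ : (A → ℝ) → (X → ℝ) → ℝ)
    (hℓ : ∀ p q, ℓ p q = ∑ a, p a * ∑ x, q x *
      ((∑ i, if memb a i = some x then lam a i else 0) / (n x * Φ a)))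
    -- the strategies p*, q*
    (pstar : A → ℝ) (qstar : X → ℝ)
    (hp : ∀ a, pstar a = Φ a * μ a / ∑ a', Φ a' * μ a')
    (hq : ∀ x, qstar x = n x * u x / ∑ x', n x' * u x') :
    (∀ p : A → ℝ, (∀ a, 0 ≤ p a) → (∑ a, p a) = 1 →
      ℓ p qstar ≥ 1 / ∑ x, n x * u x) ∧
    ℓ pstar qstar = 1 / ∑ x, n x * u x := by
  obtain rfl : qstar = _ := funext hq
  obtain rfl : pstar = _ := funext hp
  set U := ∑ x, n x * u x
  have hu : ∀ x, 0 < u x := fun x => by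
    obtain ⟨a, i, hi, hj⟩ := hsingle x
    exact pos_of_le_sum_mul_elim_of_single (hΦ a) (hlam0 a i) hi hj (fun j => (hlamnone a j).2)
      (hstab1 a)
  have hU : 0 < U := sum_pos (fun x _ => mul_pos (hn x) (hu x)) univ_nonempty
  have hS : 0 < ∑ a, Φ a * μ a := by
    obtain ⟨x⟩ := ‹Nonempty X›
    obtain ⟨a, hμa⟩ := exists_pos_of_sum_mul_ne_zero hμ0 ((hfeas x).trans_ne (hn x).ne')
    exact sum_pos' (fun a _ => mul_nonneg (hΦ a).le (hμ0 a)) ⟨a, mem_univ a, mul_pos (hΦ a) hμa⟩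
  have hloss := fun a => sum_loss_eq_div (fun x => (hn x).ne') (memb a) (lam a) u U (Φ a)
  have hΦU : ∀ a, 1 / U = Φ a / (U * Φ a) := fun a => by field_simp [(hΦ a).ne']
  refine ⟨fun p hp0 hp1 => ?_, ?_⟩
  · rw [hℓ]
    refine le_sum_mul_of_forall_le hp0 hp1 fun a => ?_
    rw [hloss, hΦU a]
    exact div_le_div_of_nonneg_right (hstab1 a) (mul_pos hU (hΦ a)).le
  · rw [hℓ]
    refine sum_mul_eq_of_ne_zero (by rw [← sum_div, div_self hS.ne']) fun a hpa => ?_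
    have hμa : 0 < μ a := (hμ0 a).lt_of_ne' (right_ne_zero_of_mul (left_ne_zero_of_mul hpa))
    rw [hloss, hΦU a, hstab2 a hμa]

/-- In the many-to-one LTU model, for a stable outcome (μ*, u*),
the strategy p* is a best response to q* in the N-dimensional hide-and-seek
game: every p yields expected loss at least 1/(nᵀu*), with equality at p*. -/
theorem many_to_one_player1_best_response
    {X : Type*} [Fintype X] [DecidableEq X] [Nonempty X]
    {N : ℕ} {A : Type*} [Fintype A]
    (memb : A → Fin N → Option X)
    (lam : A → Fin N → ℝ) (Φ : A → ℝ) (n : X → ℝ)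
    (μ : A → ℝ) (u : X → ℝ)
    (hn : ∀ x, 0 < n x) (hΦ : ∀ a, 0 < Φ a)
    (hlam0 : ∀ a i, 0 ≤ lam a i)
    (hlam1 : ∀ a, ∑ i, lam a i = 1)
    (hlamnone : ∀ a i, lam a i = 0 ↔ memb a i = none)
    -- the empty arrangement is excluded
    (hne : ∀ a : A, ∃ i, memb a i ≠ none)
    -- each type has a singleton arrangement
    (hsingle : ∀ x : X, ∃ a : A, ∃ i, memb a i = some x ∧ ∀ j, j ≠ i → memb a j = none)
    -- stability of (μ, u)
    (hμ0 : ∀ a, 0 ≤ μ a)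
    (hfeas : ∀ x, ∑ a, ((Finset.univ.filter fun i => memb a i = some x).card : ℝ) * μ a = n x)
    (hstab1 : ∀ a, ∑ i, lam a i * (memb a i).elim 0 u ≥ Φ a)
    (hstab2 : ∀ a, 0 < μ a → ∑ i, lam a i * (memb a i).elim 0 u = Φ a)
    -- expected loss of player 1
    (ℓ : (A → ℝ) → (X → ℝ) → ℝ)
    (hℓ : ∀ p q, ℓ p q = ∑ a, p a * ∑ x, q x *
      ((∑ i, if memb a i = some x then lam a i else 0) / (n x * Φ a)))
    -- the strategies p*, q*
    (pstar : A → ℝ) (qstar : X → ℝ)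
    (hp : ∀ a, pstar a = Φ a * μ a / ∑ a', Φ a' * μ a')
    (hq : ∀ x, qstar x = n x * u x / ∑ x', n x' * u x') :
    (∀ p : A → ℝ, (∀ a, 0 ≤ p a) → (∑ a, p a) = 1 →
      ℓ p qstar ≥ 1 / ∑ x, n x * u x) ∧
    ℓ pstar qstar = 1 / ∑ x, n x * u x :=
  many_to_one_player1_best_response_general memb lam Φ n μ u hn hΦ hlam0 hlamnone hsingle hμ0 hfeas
    hstab1 hstab2 ℓ hℓ pstar qstar hp hq
end
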